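/- arXiv:2605.00404 — 2 statements merged into one kernel-verified Lean document; each statement's English description precedes it below -/
import Mathlib

section
/- Let n ≥ 2 and let ε : Fin (n−1) → Fin n × Fin n be a list of n−1 oriented edges on the vertex set Fin n such that the simple graph G on Fin n whose adjacency relation is generated by the unordered pairs {ε(l).1, ε(l).2} (with ε(l).1 ≠ ε(l).2 for every l, and with distinct edges giving distinct unordered pairs) is a tree. Let H ∈ ℂ^{n×(n−1)} be the oriented incidence matrix of ε, and let V ∈ ℂ^n be a vector such that V_{ε(l).1} ≠ V_{ε(l).2} for every edge l. Then the matrix A = H · diag(Hᵀ V) ∈ ℂ^{n×(n−1)} has rank n−1; in particular, the map y ↦ A y from ℂ^{n−1} to ℂ^n is injective, so a single voltage–current measurement uniquely determines the n−1 edge admittances of a tree network. -/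
/-- For a tree network on `n` nodes with oriented edge list `ε`
(with `n - 1` edges, no self-loops, distinct unordered pairs), oriented incidence
matrix `H`, and a voltage vector `V` taking distinct values across every edge,
the matrix `A = H * diag(Hᵀ V)` has rank `n - 1`; in particular `y ↦ A y`
is injective, so a single measurement determines the edge admittances. -/
theorem stmt4 (n : ℕ) (hn : 2 ≤ n) (ε : Fin (n - 1) → Fin n × Fin n)
    (hne : ∀ l, (ε l).1 ≠ (ε l).2)
    (hinj : Function.Injective fun l => s((ε l).1, (ε l).2))
    (htree : (SimpleGraph.fromEdgeSet
        {e : Sym2 (Fin n) | ∃ l, e = s((ε l).1, (ε l).2)}).IsTree)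
    (H : Matrix (Fin n) (Fin (n - 1)) ℂ)
    (hH : ∀ i l, H i l = if i = (ε l).1 then 1 else if i = (ε l).2 then -1 else 0)
    (V : Fin n → ℂ) (hV : ∀ l, V (ε l).1 ≠ V (ε l).2) :
    (H * Matrix.diagonal (H.transpose.mulVec V)).rank = n - 1 ∧
      Function.Injective (H * Matrix.diagonal (H.transpose.mulVec V)).mulVec := by
  classical
  -- key computation: (Hᵀ x)_l = x (ε l).1 - x (ε l).2
  have hcomp : ∀ (x : Fin n → ℂ) (l : Fin (n-1)),
      H.transpose.mulVec x l = x (ε l).1 - x (ε l).2 := by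
    intro x l
    have : ∀ i : Fin n, H i l * x i =
        (if i = (ε l).1 then x i else 0) + (if i = (ε l).2 then -x i else 0) := by
      intro i
      rw [hH]
      rcases eq_or_ne i (ε l).1 with h1 | h1
      · subst h1; simp [hne l]
      · rcases eq_or_ne i (ε l).2 with h2 | h2
        · subst h2; simp [Ne.symm (hne l)]
        · simp [h1, h2]
    simp only [Matrix.mulVec, dotProduct, Matrix.transpose_apply]
    rw [Finset.sum_congr rfl fun i _ => this i, Finset.sum_add_distrib,
      Finset.sum_ite_eq' Finset.univ, Finset.sum_ite_eq' Finset.univ]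
    simp [sub_eq_add_neg]
  set D := H.transpose.mulVec V with hD
  have hDne : ∀ l, D l ≠ 0 := by
    intro l
    rw [hD, hcomp, sub_ne_zero]
    exact hV l
  -- connectedness: if x agrees across all edges, x is constant
  have hconst : ∀ (x : Fin n → ℂ), (∀ l, x (ε l).1 = x (ε l).2) →
      ∀ i j : Fin n, x i = x j := by
    intro x hx i j
    have hr := htree.isConnected.preconnected i j
    obtain ⟨p⟩ := hr
    induction p with
    | nil => rfl
    | cons h p ih =>
      rename_i a b c
      have hadj := h
      rw [SimpleGraph.fromEdgeSet_adj] at hadj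
      obtain ⟨⟨l, hl⟩, hab⟩ := hadj
      rw [Sym2.eq_iff] at hl
      have hstep : x a = x b := by
        rcases hl with ⟨h1, h2⟩ | ⟨h1, h2⟩
        · rw [h1, h2]; exact hx l
        · rw [h1, h2]; exact (hx l).symm
      rw [hstep]; exact ih
  -- kernel of Hᵀ is the constants
  have i0 : Fin n := ⟨0, by omega⟩
  let C : ℂ →ₗ[ℂ] (Fin n → ℂ) := LinearMap.pi fun _ => LinearMap.id
  have hker : LinearMap.ker H.transpose.mulVecLin = LinearMap.range C := by
    ext x
    simp only [LinearMap.mem_ker, LinearMap.mem_range]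
    constructor
    · intro hx
      refine ⟨x i0, funext fun j => ?_⟩
      have hx' : ∀ l, x (ε l).1 = x (ε l).2 := by
        intro l
        have := congrFun hx l
        rw [Matrix.mulVecLin_apply, hcomp, Pi.zero_apply] at this
        exact sub_eq_zero.mp this
      exact (hconst x hx' j i0).symm
    · rintro ⟨c, rfl⟩
      funext l
      rw [Matrix.mulVecLin_apply, hcomp]
      simp [C]
  have hCinj : Function.Injective C := by
    intro a b hab
    exact congrFun hab i0
  have hkerdim : Module.finrank ℂ (LinearMap.ker H.transpose.mulVecLin) = 1 := by
    rw [hker, LinearMap.finrank_range_of_inj hCinj, Module.finrank_self]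
  have hrn := LinearMap.finrank_range_add_finrank_ker H.transpose.mulVecLin
  rw [hkerdim] at hrn
  have hdim : Module.finrank ℂ (Fin n → ℂ) = n := by simp
  rw [hdim] at hrn
  have hrankHt : H.transpose.rank = n - 1 := by
    unfold Matrix.rank
    omega
  have hrankH : H.rank = n - 1 := by
    rw [← Matrix.rank_transpose]; exact hrankHt
  have hdet : IsUnit (Matrix.diagonal D).det := by
    rw [Matrix.det_diagonal]
    exact (Finset.prod_ne_zero_iff.mpr fun l _ => hDne l).isUnit
  have hrankA : (H * Matrix.diagonal D).rank = n - 1 := by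
    rw [Matrix.rank_mul_eq_left_of_isUnit_det _ _ hdet]
    exact hrankH
  refine ⟨hrankA, ?_⟩
  -- injectivity
  have hrn2 := LinearMap.finrank_range_add_finrank_ker (H * Matrix.diagonal D).mulVecLin
  have hdim2 : Module.finrank ℂ (Fin (n-1) → ℂ) = n - 1 := by simp
  rw [hdim2] at hrn2
  have : Module.finrank ℂ (LinearMap.ker (H * Matrix.diagonal D).mulVecLin) = 0 := by
    have := hrankA
    unfold Matrix.rank at this
    omega
  have hkbot : LinearMap.ker (H * Matrix.diagonal D).mulVecLin = ⊥ :=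
    Submodule.finrank_eq_zero.mp this
  have hinj2 := LinearMap.ker_eq_bot.mp hkbot
  intro a b hab
  exact hinj2 (by simpa [Matrix.mulVecLin_apply] using hab)
end

section
/- Let n ≥ 4 and τ ≥ 1 be natural numbers, fix an ordered pair (a₀, b₀) with a₀ < b₀ in Fin n, and let E be the set of all pairs (a,b) with a < b in Fin n except (a₀,b₀), so that |E| = n(n−1)/2 − 1. Let V : Fin τ → Fin n → ℂ be voltage measurements whose nτ coordinates {V_k(i) : k ∈ Fin τ, i ∈ Fin n} form an algebraically independent family over ℚ. Define the voltage coefficient matrix A ∈ ℂ^{(nτ)×|E|} whose rows are indexed by pairs (k,i) ∈ Fin τ × Fin n and columns by edges (a,b) ∈ E, with entry equal to V_k(a) − V_k(b) if i = a, equal to V_k(b) − V_k(a) if i = b, and 0 otherwise. Then the map y ↦ A y from ℂ^{|E|} to ℂ^{nτ} is injective (i.e., A has full column rank n(n−1)/2 − 1) if and only if τ ≥ n−2. -/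
/-!
Write `L y = ∑ₑ yₑ (e_a - e_b)(e_a - e_b)ᵀ` for the Laplacian of edge weights `y` on `E`; then
entry `(k, i)` of `A y` is `(L y Vₖ) i`. The weights are minus the off-diagonal entries of `L y`,
and the matrices `L y` are exactly the symmetric matrices with zero row sums and zero
`(a₀, b₀)` entry. So `A y = 0` says that such a matrix annihilates `1, V₀, …, V_{τ-1}`.

If `τ ≥ n - 2`, a row `z` of such a matrix with a zero entry `z c = 0` is orthogonal to
`1, V₀, …, V_{n-3}`. With coordinate `c` deleted these form a square matrix whose determinant is
a polynomial in the `V`s specialising to a Vandermonde determinant, hence nonzero by genericity;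
so `z = 0`. This kills row `a₀` (zero at `b₀`), and then by symmetry every row (zero at `a₀`).
If `τ ≤ n - 3`, some `u ≠ 0` is orthogonal to `e_{a₀}, 1, V₀, …, V_{τ-1}`, and `u uᵀ` is a
nonzero such matrix.
-/

open Matrix MvPolynomial

namespace GridIdentification

section Genericity

variable {m : ℕ}

def onesConsMinor {S : Type*} [One S] (W : Fin m → Fin (m + 2) → S) (c : Fin (m + 2)) :
    Matrix (Fin (m + 1)) (Fin (m + 1)) S :=
  (of (Fin.cons 1 W : Fin (m + 1) → Fin (m + 2) → S)).submatrix id c.succAbove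

lemma onesConsMinor_map {S T : Type*} [One S] [One T] (W : Fin m → Fin (m + 2) → S)
    (c : Fin (m + 2)) {f : S → T} (hf : f 1 = 1) :
    (onesConsMinor W c).map f = onesConsMinor (fun k j => f (W k j)) c := by
  ext r s
  cases r using Fin.cases <;> simp [onesConsMinor, hf]

lemma onesConsMinor_pow {S : Type*} [CommRing S] (c : Fin (m + 2)) :
    onesConsMinor (fun k (j : Fin (m + 2)) => ((j : ℕ) : S) ^ ((k : ℕ) + 1)) c
      = (vandermonde fun s => ((c.succAbove s : ℕ) : S))ᵀ := by
  ext r s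
  cases r using Fin.cases <;> simp [onesConsMinor, vandermonde]

variable {R K : Type*} [CommRing R] [IsDomain R] [CharZero R]

lemma det_onesConsMinor_X_ne_zero (c : Fin (m + 2)) :
    (onesConsMinor (fun k j => (X (k, j) : MvPolynomial (Fin m × Fin (m + 2)) R)) c).det ≠ 0 := by
  intro h
  have hev := congrArg (eval fun p : Fin m × Fin (m + 2) => ((p.2 : ℕ) : R) ^ ((p.1 : ℕ) + 1)) h
  rw [RingHom.map_det, RingHom.mapMatrix_apply, onesConsMinor_map _ _ (map_one _)] at hev
  simp only [eval_X, map_zero] at hev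
  rw [onesConsMinor_pow, det_transpose] at hev
  refine det_vandermonde_ne_zero_iff.mpr (fun s t hst => ?_) hev
  exact c.succAbove_right_injective (Fin.ext (by exact_mod_cast hst))

lemma det_onesConsMinor_ne_zero [CommRing K] [Algebra R K] {W : Fin m → Fin (m + 2) → K}
    (hW : AlgebraicIndependent R fun p : Fin m × Fin (m + 2) => W p.1 p.2) (c : Fin (m + 2)) :
    (onesConsMinor W c).det ≠ 0 := by
  have hspec : aeval (fun p : Fin m × Fin (m + 2) => W p.1 p.2)
      (onesConsMinor (fun k j => (X (k, j) : MvPolynomial _ R)) c).det = (onesConsMinor W c).det := by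
    rw [AlgHom.map_det, AlgHom.mapMatrix_apply, onesConsMinor_map _ _ (map_one _)]
    simp only [aeval_X]
  rw [← hspec, ← map_zero (aeval (R := R) fun p : Fin m × Fin (m + 2) => W p.1 p.2)]
  exact (algebraicIndependent_iff_injective_aeval.mp hW).ne (det_onesConsMinor_X_ne_zero c)

lemma eq_zero_of_dotProduct_eq_zero [Field K] [Algebra R K] {τ : ℕ} (hm : m ≤ τ)
    {V : Fin τ → Fin (m + 2) → K}
    (hV : AlgebraicIndependent R fun p : Fin τ × Fin (m + 2) => V p.1 p.2)
    {c : Fin (m + 2)} {z : Fin (m + 2) → K} (hzc : z c = 0) (hz1 : z ⬝ᵥ 1 = 0)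
    (hzV : ∀ k, z ⬝ᵥ V k = 0) : z = 0 := by
  set W : Fin m → Fin (m + 2) → K := fun k => V (Fin.castLE hm k)
  have hW : AlgebraicIndependent R fun p : Fin m × Fin (m + 2) => W p.1 p.2 :=
    hV.comp (Prod.map (Fin.castLE hm) id) (Fin.castLE_injective hm |>.prodMap Function.injective_id)
  have hrow : ∀ r, (onesConsMinor W c *ᵥ (z ∘ c.succAbove)) r
      = (Fin.cons 1 W : Fin (m + 1) → Fin (m + 2) → K) r ⬝ᵥ z := by
    intro r
    simp [mulVec, dotProduct, onesConsMinor, Fin.sum_univ_succAbove _ c, hzc]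
  have hker : onesConsMinor W c *ᵥ (z ∘ c.succAbove) = 0 := by
    ext r
    cases r using Fin.cases <;> simp [hrow, dotProduct_comm _ z, hz1, hzV, W]
  have hinj := mulVec_injective_iff_isUnit.mpr
    ((isUnit_iff_isUnit_det _).mpr (det_onesConsMinor_ne_zero hW c).isUnit)
  have hz' : z ∘ c.succAbove = 0 := hinj (hker.trans (mulVec_zero _).symm)
  funext j
  rcases c.eq_self_or_eq_succAbove j with rfl | ⟨s, rfl⟩
  · exact hzc
  · exact congrFun hz' s

lemma eq_zero_of_isSymm_of_mulVec_eq_zero [Field K] [Algebra R K] {τ : ℕ} (hm : m ≤ τ)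
    {V : Fin τ → Fin (m + 2) → K}
    (hV : AlgebraicIndependent R fun p : Fin τ × Fin (m + 2) => V p.1 p.2)
    {L : Matrix (Fin (m + 2)) (Fin (m + 2)) K} (hL : L.IsSymm) (h1 : L *ᵥ 1 = 0)
    (hLV : ∀ k, L *ᵥ V k = 0) {c d : Fin (m + 2)} (hcd : L c d = 0) : L = 0 := by
  have row_eq_zero : ∀ i j, L i j = 0 → L i = 0 := fun i _ h =>
    eq_zero_of_dotProduct_eq_zero hm hV h (congrFun h1 i) fun k => congrFun (hLV k) i
  have hc : L c = 0 := row_eq_zero c d hcd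
  ext i j
  exact congrFun (row_eq_zero i c (by rw [← hL.apply i c, hc, Pi.zero_apply])) j

end Genericity

section LinearAlgebra

variable {K ι κ : Type*}

lemma ext_of_mulVec_one [CommRing K] [Fintype ι] [DecidableEq ι] {M N : Matrix ι ι K}
    (h1 : M *ᵥ 1 = N *ᵥ 1) (hoff : ∀ i j, i ≠ j → M i j = N i j) : M = N := by
  ext i j
  rcases eq_or_ne i j with rfl | hij
  · have hsplit : ∀ P : Matrix ι ι K, (P *ᵥ 1) i = P i i + ∑ j ∈ Finset.univ.erase i, P i j :=
      fun P => by simp [mulVec, dotProduct]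
    have hrow := congrFun h1 i
    rw [hsplit, hsplit, Finset.sum_congr rfl fun j hj => hoff i j (Finset.ne_of_mem_erase hj).symm]
      at hrow
    exact add_right_cancel hrow
  · exact hoff i j hij

lemma exists_ne_zero_forall_dotProduct_eq_zero [Field K] [Fintype ι] [Fintype κ] (w : ι → κ → K)
    (h : Fintype.card ι < Fintype.card κ) : ∃ u ≠ 0, ∀ i, w i ⬝ᵥ u = 0 := by
  obtain ⟨u, hu, hu0⟩ := (Submodule.ne_bot_iff _).mp <|
    LinearMap.ker_ne_bot_of_finrank_lt (f := (of w).mulVecLin) (by simpa using h)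
  exact ⟨u, hu0, fun i => congrFun (LinearMap.mem_ker.mp hu) i⟩

end LinearAlgebra

section Laplacian

variable {K : Type*} [CommRing K] {n : ℕ} {a₀ b₀ : Fin n}

abbrev Edge (a₀ b₀ : Fin n) := {p : Fin n × Fin n // p.1 < p.2 ∧ p ≠ (a₀, b₀)}

def incidence (p : Fin n × Fin n) : Fin n → K := Pi.single p.1 1 - Pi.single p.2 1

def laplacian (y : Edge a₀ b₀ → K) : Matrix (Fin n) (Fin n) K :=
  ∑ p, y p • vecMulVec (incidence p.1) (incidence p.1)

lemma incidence_dotProduct (p : Fin n × Fin n) (v : Fin n → K) :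
    incidence p ⬝ᵥ v = v p.1 - v p.2 := by
  simp [incidence, sub_dotProduct, single_dotProduct]

lemma incidence_mul_incidence {p : Fin n × Fin n} (hp : p.1 < p.2) {i j : Fin n} (hij : i < j) :
    incidence p i * incidence p j = (if p = (i, j) then -1 else 0 : K) := by
  simp only [incidence, Pi.sub_apply, Pi.single_apply, Prod.ext_iff]
  grind

lemma laplacian_isSymm (y : Edge a₀ b₀ → K) : (laplacian y).IsSymm := by
  simp [IsSymm, laplacian, transpose_sum, transpose_vecMulVec]

lemma laplacian_mulVec (y : Edge a₀ b₀ → K) (v : Fin n → K) :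
    laplacian y *ᵥ v = ∑ p, (y p * (v p.1.1 - v p.1.2)) • incidence p.1 := by
  simp only [laplacian, sum_mulVec, smul_mulVec, vecMulVec_mulVec, op_smul_eq_smul,
    incidence_dotProduct, smul_smul]

lemma laplacian_mulVec_one (y : Edge a₀ b₀ → K) : laplacian y *ᵥ 1 = 0 := by
  simp [laplacian_mulVec]

lemma laplacian_apply_of_lt (y : Edge a₀ b₀ → K) {i j : Fin n} (hij : i < j) :
    laplacian y i j = -∑ p : Edge a₀ b₀, if p.1 = (i, j) then y p else 0 := by
  rw [← Finset.sum_neg_distrib]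
  refine (Matrix.sum_apply _ _ _ _).trans (Finset.sum_congr rfl fun p _ => ?_)
  rw [Matrix.smul_apply, vecMulVec_apply, incidence_mul_incidence p.2.1 hij]
  split_ifs <;> simp

lemma laplacian_apply_edge (y : Edge a₀ b₀ → K) (p : Edge a₀ b₀) :
    laplacian y p.1.1 p.1.2 = -y p := by
  simp [laplacian_apply_of_lt y p.2.1, ← Subtype.ext_iff]

lemma laplacian_apply_removed (hab : a₀ < b₀) (y : Edge a₀ b₀ → K) : laplacian y a₀ b₀ = 0 := by
  rw [laplacian_apply_of_lt y hab, Finset.sum_eq_zero fun q _ => if_neg q.2.2, neg_zero]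

lemma laplacian_neg_apply (hab : a₀ < b₀) {L : Matrix (Fin n) (Fin n) K} (hL : L.IsSymm)
    (h1 : L *ᵥ 1 = 0) (h : L a₀ b₀ = 0) :
    laplacian (fun p : Edge a₀ b₀ => -L p.1.1 p.1.2) = L := by
  set y : Edge a₀ b₀ → K := fun p => -L p.1.1 p.1.2
  have hlt : ∀ i j, i < j → laplacian y i j = L i j := by
    intro i j hij
    by_cases hp : (i, j) = (a₀, b₀)
    · obtain ⟨rfl, rfl⟩ := Prod.mk.inj hp
      rw [laplacian_apply_removed hab, h]
    · simpa [y] using laplacian_apply_edge y ⟨(i, j), hij, hp⟩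
  refine ext_of_mulVec_one (by rw [laplacian_mulVec_one, h1]) fun i j hij => ?_
  rcases hij.lt_or_gt with hij | hji
  · exact hlt i j hij
  · rw [(laplacian_isSymm y).apply j i, hL.apply j i]
    exact hlt j i hji

end Laplacian

section VoltageMatrix

variable {K : Type*} [Field K] {n τ : ℕ} {a₀ b₀ : Fin n} {V : Fin τ → Fin n → K}
  {A : Matrix (Fin τ × Fin n) (Edge a₀ b₀) K}

variable (hA : ∀ (k : Fin τ) (i : Fin n) (p : Edge a₀ b₀),
      A (k, i) p =
        if i = p.1.1 then V k p.1.1 - V k p.1.2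
        else if i = p.1.2 then V k p.1.2 - V k p.1.1 else 0)
include hA

lemma mulVec_apply_eq_laplacian_mulVec (y : Edge a₀ b₀ → K) (k : Fin τ) (i : Fin n) :
    (A *ᵥ y) (k, i) = (laplacian y *ᵥ V k) i := by
  rw [laplacian_mulVec, Finset.sum_apply]
  refine Finset.sum_congr rfl fun p _ => ?_
  have hne : p.1.1 ≠ p.1.2 := p.2.1.ne
  dsimp only
  rw [hA, Pi.smul_apply, smul_eq_mul, incidence, Pi.sub_apply, Pi.single_apply, Pi.single_apply]
  split_ifs <;> simp_all <;> ring

lemma injective_mulVec_of_le {R : Type*} [CommRing R] [IsDomain R] [CharZero R] [Algebra R K]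
    (hab : a₀ < b₀) (hV : AlgebraicIndependent R fun p : Fin τ × Fin n => V p.1 p.2)
    (hτ : n - 2 ≤ τ) : Function.Injective A.mulVec := by
  obtain ⟨m, rfl⟩ : ∃ m, n = m + 2 := ⟨n - 2, by have := b₀.isLt; omega⟩
  rw [← coe_mulVecLin, injective_iff_map_eq_zero]
  intro y hy
  have hLV : ∀ k, laplacian y *ᵥ V k = 0 := fun k => funext fun i => by
    rw [← mulVec_apply_eq_laplacian_mulVec hA]
    exact congrFun hy (k, i)
  have hL : laplacian y = 0 := eq_zero_of_isSymm_of_mulVec_eq_zero (by omega) hV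
    (laplacian_isSymm y) (laplacian_mulVec_one y) hLV (laplacian_apply_removed hab y)
  funext p
  simpa [hL] using laplacian_apply_edge y p

lemma not_injective_mulVec_of_lt (hab : a₀ < b₀) (hτ : τ + 2 < n) :
    ¬ Function.Injective A.mulVec := by
  obtain ⟨u, hu, hu0⟩ := exists_ne_zero_forall_dotProduct_eq_zero
    (Fin.cons (Pi.single a₀ 1) (Fin.cons 1 V) : Fin (τ + 2) → Fin n → K) (by simpa using hτ)
  have hua : u a₀ = 0 := by simpa using hu0 0
  have hu1 : 1 ⬝ᵥ u = 0 := by simpa using hu0 1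
  have huV : ∀ k, V k ⬝ᵥ u = 0 := fun k => by simpa using hu0 k.succ.succ
  set L := vecMulVec u u
  have hL : laplacian (fun p : Edge a₀ b₀ => -L p.1.1 p.1.2) = L :=
    laplacian_neg_apply hab (transpose_vecMulVec u u)
      (by simp [L, vecMulVec_mulVec, dotProduct_comm u, hu1]) (by simp [L, vecMulVec_apply, hua])
  intro hinj
  have hy : (fun p : Edge a₀ b₀ => -L p.1.1 p.1.2) = 0 :=
    (injective_iff_map_eq_zero A.mulVecLin).mp hinj _ <| funext fun ⟨k, i⟩ => by
      rw [mulVecLin_apply, mulVec_apply_eq_laplacian_mulVec hA, hL]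
      simp [L, vecMulVec_mulVec, dotProduct_comm u, huV]
  have hL0 : L = 0 := by rw [← hL, hy]; simp [laplacian]
  exact hu (by simpa using vecMulVec_eq_zero.mp hL0)

end VoltageMatrix

end GridIdentification

open GridIdentification

theorem stmt5_general (n τ : ℕ)
    (a₀ b₀ : Fin n) (hab : a₀ < b₀)
    (V : Fin τ → Fin n → ℂ)
    (hgen : AlgebraicIndependent ℚ fun p : Fin τ × Fin n => V p.1 p.2)
    (A : Matrix (Fin τ × Fin n) {p : Fin n × Fin n // p.1 < p.2 ∧ p ≠ (a₀, b₀)} ℂ)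
    (hA : ∀ (k : Fin τ) (i : Fin n)
        (p : {p : Fin n × Fin n // p.1 < p.2 ∧ p ≠ (a₀, b₀)}),
      A (k, i) p =
        if i = p.1.1 then V k p.1.1 - V k p.1.2
        else if i = p.1.2 then V k p.1.2 - V k p.1.1 else 0) :
    Function.Injective A.mulVec ↔ n - 2 ≤ τ :=
  ⟨fun hinj => by
    by_contra hτ
    exact not_injective_mulVec_of_lt hA hab (by omega) hinj,
   injective_mulVec_of_le hA hab hgen⟩

/-- For the complete graph on `n ≥ 4` nodes minus the single edge
`(a₀, b₀)`, with generic (algebraically independent over `ℚ`) voltage measurements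
`V : Fin τ → Fin n → ℂ`, the voltage coefficient matrix `A` has full column rank
(equivalently `y ↦ A y` is injective) if and only if `τ ≥ n - 2`. -/
theorem stmt5 (n τ : ℕ) (hn : 4 ≤ n) (hτ : 1 ≤ τ)
    (a₀ b₀ : Fin n) (hab : a₀ < b₀)
    (V : Fin τ → Fin n → ℂ)
    (hgen : AlgebraicIndependent ℚ fun p : Fin τ × Fin n => V p.1 p.2)
    (A : Matrix (Fin τ × Fin n) {p : Fin n × Fin n // p.1 < p.2 ∧ p ≠ (a₀, b₀)} ℂ)
    (hA : ∀ (k : Fin τ) (i : Fin n)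
        (p : {p : Fin n × Fin n // p.1 < p.2 ∧ p ≠ (a₀, b₀)}),
      A (k, i) p =
        if i = p.1.1 then V k p.1.1 - V k p.1.2
        else if i = p.1.2 then V k p.1.2 - V k p.1.1 else 0) :
    Function.Injective A.mulVec ↔ n - 2 ≤ τ :=
  stmt5_general n τ a₀ b₀ hab V hgen A hA
end
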